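/- arXiv:1312.0471 — 2 statements merged into one kernel-verified Lean document; each statement's English description precedes it below -/
import Mathlib

section
/- Let $\varphi$ be an automorphism of $\mathbb{B}_N$ whose only fixed point in $\overline{\mathbb{B}_N}$ is $e_1 \in S_N$. Then $\lim_{z\to e_1,\, z\in\mathbb{B}_N} \frac{1-\|\varphi(z)\|^2}{1-\|z\|^2} = 1$. -/
/-!
Schwarz–Pick makes every automorphism of the ball preserve the kernel
`(1 - ‖w‖²)(1 - ‖z‖²) / |1 - ⟪w, z⟫|²`. Taking `w = 0` gives
`(1 - ‖φ z‖²) / (1 - ‖z‖²) = |1 - ⟪φ z, b⟫|² / (1 - ‖b‖²)` with `b = φ 0`, which tends to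
`L = |1 - ⟪e, b⟫|² / (1 - ‖b‖²)` as `z → e`; letting `w → e` instead shows that `φ` multiplies the
horocycle function `|1 - ⟪e, z⟫|² / (1 - ‖z‖²)` by `L`. If `L > 1` (resp. `L < 1`), the orbit of `0`
under `φ` (resp. `φ⁻¹`) therefore satisfies `1 - ‖zₙ‖² = O(qⁿ)` with `q < 1`. Consecutive points of
the orbit are at a fixed pseudo-hyperbolic distance, so the orbit is Cauchy; its limit is a fixed
point of `φ` in the closed ball, hence `e`. Near `e` the ratio `(1 - ‖zₙ₊₁‖²) / (1 - ‖zₙ‖²)` then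
tends to `L` (resp. `L⁻¹`), which is `> 1`, contradicting the summability of `1 - ‖zₙ‖²`.
So `L = 1`; this replaces the Wolff lemma.
-/

open Metric Filter Set Topology Function
open scoped InnerProductSpace

namespace UnitBall

lemma one_sub_norm_sq_pos {F : Type*} [SeminormedAddCommGroup F] {z : F} (hz : ‖z‖ < 1) :
    0 < 1 - ‖z‖ ^ 2 := by
  nlinarith [norm_nonneg z]

lemma sq_sqrt_one_sub_norm_sq {F : Type*} [SeminormedAddCommGroup F] {a : F} (ha : ‖a‖ < 1) :
    (√(1 - ‖a‖ ^ 2) : ℂ) ^ 2 = 1 - (‖a‖ : ℂ) ^ 2 := by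
  rw [← Complex.ofReal_pow, Real.sq_sqrt (one_sub_norm_sq_pos ha).le]
  push_cast
  rfl

lemma norm_iterate_lt_one {F : Type*} [SeminormedAddCommGroup F] {g : F → F}
    (hg : MapsTo g (ball 0 1) (ball 0 1)) (n : ℕ) : ‖g^[n] 0‖ < 1 :=
  mem_ball_zero_iff.1 (hg.iterate n (mem_ball_self one_pos))

lemma cauchySeq_of_dist_sq_le_geometric {X : Type*} [PseudoMetricSpace X] {u : ℕ → X}
    {K r : ℝ} (hr0 : 0 ≤ r) (hr1 : r < 1) (h : ∀ n, dist (u n) (u (n + 1)) ^ 2 ≤ K * r ^ n) :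
    CauchySeq u := by
  have hK : 0 ≤ K := by simpa using (sq_nonneg _).trans (h 0)
  refine cauchySeq_of_le_geometric √r √K ((Real.sqrt_lt' one_pos).2 (by simpa using hr1)) fun n ↦ ?_
  refine le_of_sq_le_sq ?_ (by positivity)
  rw [mul_pow, ← pow_mul, mul_comm n, pow_mul, Real.sq_sqrt hK, Real.sq_sqrt hr0]
  exact h n

lemma isFixedPt_of_tendsto {X ι : Type*} [TopologicalSpace X] [T2Space X] {f : X → X}
    {s : Set X} {l : Filter ι} [l.NeBot] {u : ι → X} {x : X} (hf : ContinuousWithinAt f s x)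
    (hus : ∀ᶠ i in l, u i ∈ s) (hu : Tendsto u l (𝓝 x)) (hfu : Tendsto (f ∘ u) l (𝓝 x)) :
    IsFixedPt f x :=
  tendsto_nhds_unique (hf.tendsto.comp (tendsto_nhdsWithin_iff.2 ⟨hu, hus⟩)) hfu

variable {E : Type*} [NormedAddCommGroup E] [InnerProductSpace ℂ E]

lemma norm_inner_lt_one {a z : E} (ha : ‖a‖ ≤ 1) (hz : ‖z‖ < 1) : ‖⟪a, z⟫_ℂ‖ < 1 :=
  (norm_inner_le_norm a z).trans_lt <| by nlinarith [norm_nonneg a, norm_nonneg z]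

lemma one_sub_inner_ne_zero {a z : E} (ha : ‖a‖ ≤ 1) (hz : ‖z‖ < 1) : 1 - ⟪a, z⟫_ℂ ≠ 0 := by
  intro h
  have := norm_inner_lt_one ha hz
  rw [← sub_eq_zero.1 h, norm_one] at this
  exact this.false

lemma norm_one_sub_inner_le_two {a z : E} (ha : ‖a‖ ≤ 1) (hz : ‖z‖ ≤ 1) :
    ‖1 - ⟪a, z⟫_ℂ‖ ≤ 2 :=
  calc ‖1 - ⟪a, z⟫_ℂ‖ ≤ ‖(1 : ℂ)‖ + ‖⟪a, z⟫_ℂ‖ := norm_sub_le _ _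
    _ ≤ 1 + ‖a‖ * ‖z‖ := by rw [norm_one]; gcongr; exact norm_inner_le_norm a z
    _ ≤ 2 := by nlinarith [norm_nonneg a]

lemma dist_sq_le_two_mul_norm_one_sub_inner {u v : E} (hu : ‖u‖ ≤ 1) (hv : ‖v‖ ≤ 1) :
    dist u v ^ 2 ≤ 2 * ‖1 - ⟪u, v⟫_ℂ‖ := by
  have hre : RCLike.re (1 - ⟪u, v⟫_ℂ) ≤ ‖1 - ⟪u, v⟫_ℂ‖ := RCLike.re_le_norm _
  rw [map_sub, RCLike.one_re] at hre
  rw [dist_eq_norm, @norm_sub_sq ℂ]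
  nlinarith [norm_nonneg u, norm_nonneg v]

lemma inner_self_eq_ofReal_norm_sq (a : E) : ⟪a, a⟫_ℂ = (‖a‖ : ℂ) ^ 2 :=
  inner_self_eq_norm_sq_to_K a

/-- Rudin's involution `φ_a z = (a - P_a z - √(1 - ‖a‖²) Q_a z) / (1 - ⟪a, z⟫)` of the unit ball,
with `P_a z = (⟪a, z⟫ / ‖a‖²) • a` and `Q_a = 1 - P_a`; the junk value `0 / 0 = 0` makes it `-z`
at `a = 0`, as it should be. -/
noncomputable def mobius (a z : E) : E :=
  (1 - ⟪a, z⟫_ℂ)⁻¹ •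
    ((1 - (1 - (√(1 - ‖a‖ ^ 2) : ℂ)) * (⟪a, z⟫_ℂ / (‖a‖ : ℂ) ^ 2)) • a
      - (√(1 - ‖a‖ ^ 2) : ℂ) • z)

@[simp] lemma mobius_zero_left (z : E) : mobius 0 z = -z := by
  simp [mobius]

@[simp] lemma mobius_zero_right (a : E) : mobius a 0 = a := by
  simp [mobius]

lemma one_sub_norm_mobius_sq_mul {a z : E} (ha : ‖a‖ < 1) (hz : ‖z‖ < 1) :
    (1 - ‖mobius a z‖ ^ 2) * ‖1 - ⟪a, z⟫_ℂ‖ ^ 2 = (1 - ‖a‖ ^ 2) * (1 - ‖z‖ ^ 2) := by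
  rcases eq_or_ne a 0 with rfl | ha0
  · simp
  set α : ℂ := ⟪a, z⟫_ℂ with hα
  set t : ℂ := (‖a‖ : ℂ) ^ 2
  set s : ℂ := (√(1 - ‖a‖ ^ 2) : ℂ)
  have hs2 : s ^ 2 = 1 - t := sq_sqrt_one_sub_norm_sq ha
  have htne : t ≠ 0 := by simpa [t] using ha0
  have hsr : (starRingEnd ℂ) s = s := Complex.conj_ofReal _
  have htr : (starRingEnd ℂ) t = t := by simp [t]
  set c : ℂ := 1 - (1 - s) * (α / t) with hc
  set v : E := c • a - s • z with hv
  have hv_inner : ⟪v, v⟫_ℂ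
      = (1 - α) * (starRingEnd ℂ) (1 - α) - (1 - t) * (1 - (‖z‖ : ℂ) ^ 2) := by
    have hza : ⟪z, a⟫_ℂ = (starRingEnd ℂ) α := by rw [hα, inner_conj_symm]
    simp only [hv, inner_sub_left, inner_sub_right, inner_smul_left, inner_smul_right]
    simp only [inner_self_eq_ofReal_norm_sq, hza, ← hα, hc, map_sub, map_one, map_mul, map_div₀,
      hsr, htr]
    field_simp
    linear_combination t * (t * (‖z‖ : ℂ) ^ 2 - (starRingEnd ℂ) α * α) * hs2
  have hv_norm : ‖v‖ ^ 2 = ‖1 - α‖ ^ 2 - (1 - ‖a‖ ^ 2) * (1 - ‖z‖ ^ 2) := by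
    rw [inner_self_eq_ofReal_norm_sq, Complex.mul_conj'] at hv_inner
    simp only [t] at hv_inner
    exact_mod_cast hv_inner
  have hne : ‖1 - α‖ ^ 2 ≠ 0 := pow_ne_zero _ (norm_ne_zero_iff.2 (one_sub_inner_ne_zero ha.le hz))
  change (1 - ‖(1 - α)⁻¹ • v‖ ^ 2) * ‖1 - α‖ ^ 2 = _
  rw [norm_smul, norm_inv, mul_pow, inv_pow, sub_mul, one_mul, mul_right_comm,
    inv_mul_cancel₀ hne, one_mul, hv_norm]
  ring

lemma norm_mobius_lt_one {a z : E} (ha : ‖a‖ < 1) (hz : ‖z‖ < 1) : ‖mobius a z‖ < 1 := by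
  have hpos : 0 < (1 - ‖mobius a z‖ ^ 2) * ‖1 - ⟪a, z⟫_ℂ‖ ^ 2 := by
    rw [one_sub_norm_mobius_sq_mul ha hz]
    exact mul_pos (one_sub_norm_sq_pos ha) (one_sub_norm_sq_pos hz)
  nlinarith [pos_of_mul_pos_left hpos (by positivity), norm_nonneg (mobius a z)]

lemma mapsTo_mobius {a : E} (ha : ‖a‖ < 1) : MapsTo (mobius a) (ball 0 1) (ball 0 1) :=
  fun _ hz ↦ mem_ball_zero_iff.2 (norm_mobius_lt_one ha (mem_ball_zero_iff.1 hz))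

lemma mobius_self {a : E} (ha : ‖a‖ < 1) : mobius a a = 0 := by
  rcases eq_or_ne a 0 with rfl | ha0
  · simp
  rw [mobius, inner_self_eq_ofReal_norm_sq, div_self (by simpa using ha0), mul_one,
    sub_sub_cancel, sub_self, smul_zero]

lemma inner_mobius {a z : E} (ha : ‖a‖ < 1) (hz : ‖z‖ < 1) :
    ⟪a, mobius a z⟫_ℂ = ((‖a‖ : ℂ) ^ 2 - ⟪a, z⟫_ℂ) / (1 - ⟪a, z⟫_ℂ) := by
  rcases eq_or_ne a 0 with rfl | ha0
  · simp
  have hane : (‖a‖ : ℂ) ≠ 0 := by simpa using ha0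
  have hden := one_sub_inner_ne_zero ha.le hz
  rw [mobius, inner_smul_right, inner_sub_right, inner_smul_right, inner_smul_right,
    inner_self_eq_ofReal_norm_sq]
  field_simp
  ring

lemma mobius_mobius {a z : E} (ha : ‖a‖ < 1) (hz : ‖z‖ < 1) : mobius a (mobius a z) = z := by
  rcases eq_or_ne a 0 with rfl | ha0
  · simp
  set α : ℂ := ⟪a, z⟫_ℂ
  set t : ℂ := (‖a‖ : ℂ) ^ 2
  set s : ℂ := (√(1 - ‖a‖ ^ 2) : ℂ)
  have hden : 1 - α ≠ 0 := one_sub_inner_ne_zero ha.le hz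
  have htne : t ≠ 0 := by simpa [t] using ha0
  have hsne : s ≠ 0 := by
    simpa [s] using (Real.sqrt_pos.2 (one_sub_norm_sq_pos ha)).ne'
  have hs2 : s ^ 2 = 1 - t := sq_sqrt_one_sub_norm_sq ha
  have hβ : ⟪a, mobius a z⟫_ℂ = (t - α) / (1 - α) := inner_mobius ha hz
  have hdenβ : 1 - ⟪a, mobius a z⟫_ℂ = s ^ 2 / (1 - α) := by
    rw [hβ, hs2]
    field_simp
    ring
  have hmobz : mobius a z = (1 - α)⁻¹ • ((1 - (1 - s) * (α / t)) • a - s • z) := rfl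
  rw [mobius, hdenβ, hβ, hmobz]
  change (s ^ 2 / (1 - α))⁻¹ • ((1 - (1 - s) * ((t - α) / (1 - α) / t)) • a
    - s • (1 - α)⁻¹ • ((1 - (1 - s) * (α / t)) • a - s • z)) = z
  match_scalars
  · field_simp
    linear_combination (-α) * hs2
  · field_simp

lemma differentiableOn_mobius {a : E} (ha : ‖a‖ < 1) :
    DifferentiableOn ℂ (mobius a) (ball 0 1) := by
  have hinner : Differentiable ℂ fun z : E ↦ ⟪a, z⟫_ℂ := (innerSL ℂ a).differentiable
  unfold mobius
  simp_rw [div_eq_mul_inv]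
  refine DifferentiableOn.smul ?_ (DifferentiableOn.sub ?_ (by fun_prop))
  · refine ((differentiable_const _).sub hinner).differentiableOn.inv fun z hz ↦ ?_
    exact one_sub_inner_ne_zero ha.le (mem_ball_zero_iff.1 hz)
  · exact (((differentiable_const _).sub ((differentiable_const _).mul
      (hinner.mul_const _))).smul_const a).differentiableOn

noncomputable def oneSubPseudoDistSq (w z : E) : ℝ :=
  (1 - ‖w‖ ^ 2) * (1 - ‖z‖ ^ 2) / ‖1 - ⟪w, z⟫_ℂ‖ ^ 2

@[simp] lemma oneSubPseudoDistSq_zero_left (z : E) : oneSubPseudoDistSq 0 z = 1 - ‖z‖ ^ 2 := by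
  simp [oneSubPseudoDistSq]

lemma one_sub_norm_mobius_sq {w z : E} (hw : ‖w‖ < 1) (hz : ‖z‖ < 1) :
    1 - ‖mobius w z‖ ^ 2 = oneSubPseudoDistSq w z := by
  rw [oneSubPseudoDistSq, eq_div_iff (pow_ne_zero _ (norm_ne_zero_iff.2
    (one_sub_inner_ne_zero hw.le hz))), one_sub_norm_mobius_sq_mul hw hz]

theorem norm_mobius_map_le {f : E → E} (hf : DifferentiableOn ℂ f (ball 0 1))
    (hm : MapsTo f (ball 0 1) (ball 0 1)) {w z : E} (hw : ‖w‖ < 1) (hz : ‖z‖ < 1) :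
    ‖mobius (f w) (f z)‖ ≤ ‖mobius w z‖ := by
  have hfw : ‖f w‖ < 1 := mem_ball_zero_iff.1 (hm (mem_ball_zero_iff.2 hw))
  have hd : DifferentiableOn ℂ (mobius (f w) ∘ f ∘ mobius w) (ball 0 1) :=
    (differentiableOn_mobius hfw).comp (hf.comp (differentiableOn_mobius hw) (mapsTo_mobius hw))
      (hm.comp (mapsTo_mobius hw))
  have hmaps : MapsTo (mobius (f w) ∘ f ∘ mobius w) (ball 0 1) (closedBall 0 1) :=
    ((mapsTo_mobius hfw).comp (hm.comp (mapsTo_mobius hw))).mono_right ball_subset_closedBall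
  have h0 : (mobius (f w) ∘ f ∘ mobius w) 0 = 0 := by simp [mobius_self hfw]
  simpa [mobius_mobius hw hz] using
    Complex.norm_le_norm_of_mapsTo_ball hd hmaps h0 (norm_mobius_lt_one hw hz)

/-- Level sets of `horoFun e` with `‖e‖ = 1` are the horospheres at `e`; the quantity
`|1 - a₁|² / (1 - ‖a‖²)` of the Wolff lemma is `horoFun e₁ a`. -/
noncomputable def horoFun (e z : E) : ℝ := ‖1 - ⟪e, z⟫_ℂ‖ ^ 2 / (1 - ‖z‖ ^ 2)

lemma horoFun_pos {e z : E} (he : ‖e‖ ≤ 1) (hz : ‖z‖ < 1) : 0 < horoFun e z :=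
  div_pos (pow_pos (norm_pos_iff.2 (one_sub_inner_ne_zero he hz)) 2) (one_sub_norm_sq_pos hz)

@[simp] lemma horoFun_zero_right (e : E) : horoFun e 0 = 1 := by
  simp [horoFun]

structure IsBallAut (f g : E → E) : Prop where
  differentiableOn : DifferentiableOn ℂ f (ball 0 1)
  differentiableOn_inv : DifferentiableOn ℂ g (ball 0 1)
  mapsTo : MapsTo f (ball 0 1) (ball 0 1)
  mapsTo_inv : MapsTo g (ball 0 1) (ball 0 1)
  invOn : InvOn g f (ball 0 1) (ball 0 1)

namespace IsBallAut

variable {f g : E → E}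

lemma symm (h : IsBallAut f g) : IsBallAut g f :=
  ⟨h.differentiableOn_inv, h.differentiableOn, h.mapsTo_inv, h.mapsTo, h.invOn.symm⟩

lemma norm_lt_one (h : IsBallAut f g) {z : E} (hz : ‖z‖ < 1) : ‖f z‖ < 1 :=
  mem_ball_zero_iff.1 (h.mapsTo (mem_ball_zero_iff.2 hz))

lemma norm_mobius_map (h : IsBallAut f g) {w z : E} (hw : ‖w‖ < 1) (hz : ‖z‖ < 1) :
    ‖mobius (f w) (f z)‖ = ‖mobius w z‖ := by
  refine le_antisymm (norm_mobius_map_le h.differentiableOn h.mapsTo hw hz) ?_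
  have := norm_mobius_map_le h.differentiableOn_inv h.mapsTo_inv (h.norm_lt_one hw)
    (h.norm_lt_one hz)
  rwa [h.invOn.1 (mem_ball_zero_iff.2 hw), h.invOn.1 (mem_ball_zero_iff.2 hz)] at this

lemma oneSubPseudoDistSq_map (h : IsBallAut f g) {w z : E} (hw : ‖w‖ < 1) (hz : ‖z‖ < 1) :
    oneSubPseudoDistSq (f w) (f z) = oneSubPseudoDistSq w z := by
  rw [← one_sub_norm_mobius_sq hw hz, ← one_sub_norm_mobius_sq (h.norm_lt_one hw)
    (h.norm_lt_one hz), h.norm_mobius_map hw hz]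

lemma one_sub_norm_sq_div (h : IsBallAut f g) {w z : E} (hw : ‖w‖ < 1) (hz : ‖z‖ < 1) :
    (1 - ‖f w‖ ^ 2) / (1 - ‖w‖ ^ 2)
      = (1 - ‖z‖ ^ 2) / ‖1 - ⟪w, z⟫_ℂ‖ ^ 2 * (‖1 - ⟪f w, f z⟫_ℂ‖ ^ 2 / (1 - ‖f z‖ ^ 2)) := by
  have hkey := h.oneSubPseudoDistSq_map hw hz
  have := one_sub_norm_sq_pos hw
  have := one_sub_norm_sq_pos (h.norm_lt_one hz)
  have := norm_ne_zero_iff.2 (one_sub_inner_ne_zero hw.le hz)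
  have := norm_ne_zero_iff.2 (one_sub_inner_ne_zero (h.norm_lt_one hw).le (h.norm_lt_one hz))
  simp only [oneSubPseudoDistSq] at hkey
  field_simp at hkey ⊢
  linear_combination hkey

lemma tendsto_one_sub_norm_sq_div (h : IsBallAut f g) {e : E}
    (hc : ContinuousWithinAt f (ball 0 1) e) (hfe : f e = e) :
    Tendsto (fun w ↦ (1 - ‖f w‖ ^ 2) / (1 - ‖w‖ ^ 2)) (𝓝[ball 0 1] e)
      (𝓝 (horoFun e (f 0))) := by
  have hf : Tendsto f (𝓝[ball 0 1] e) (𝓝 e) := by simpa [hfe] using hc.tendsto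
  have hcont : Continuous fun u : E ↦ ‖1 - ⟪u, f 0⟫_ℂ‖ ^ 2 / (1 - ‖f 0‖ ^ 2) := by fun_prop
  refine ((hcont.tendsto e).comp hf).congr' ?_
  filter_upwards [self_mem_nhdsWithin] with w hw
  simp [h.one_sub_norm_sq_div (mem_ball_zero_iff.1 hw) (z := 0) (by simp)]

/-- Letting `w → e` in `one_sub_norm_sq_div`. -/
lemma horoFun_map (h : IsBallAut f g) {e : E} (hc : ContinuousWithinAt f (ball 0 1) e)
    (hfe : f e = e) (he : ‖e‖ ≤ 1) {z : E} (hz : ‖z‖ < 1) :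
    horoFun e (f z) = horoFun e (f 0) * horoFun e z := by
  have := one_sub_norm_sq_pos hz
  have := one_sub_norm_sq_pos (h.norm_lt_one hz)
  have hez := norm_ne_zero_iff.2 (one_sub_inner_ne_zero he hz)
  have : (𝓝[ball 0 1] e).NeBot := mem_closure_iff_nhdsWithin_neBot.1 <| by
    rwa [closure_ball _ one_ne_zero, mem_closedBall_zero_iff]
  have hf : Tendsto f (𝓝[ball 0 1] e) (𝓝 e) := by simpa [hfe] using hc.tendsto
  have hlim : Tendsto (fun w ↦ (1 - ‖z‖ ^ 2) / ‖1 - ⟪w, z⟫_ℂ‖ ^ 2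
        * (‖1 - ⟪f w, f z⟫_ℂ‖ ^ 2 / (1 - ‖f z‖ ^ 2))) (𝓝[ball 0 1] e)
      (𝓝 ((1 - ‖z‖ ^ 2) / ‖1 - ⟪e, z⟫_ℂ‖ ^ 2 * (‖1 - ⟪e, f z⟫_ℂ‖ ^ 2 / (1 - ‖f z‖ ^ 2)))) := by
    have h1 : ContinuousAt (fun w : E ↦ (1 - ‖z‖ ^ 2) / ‖1 - ⟪w, z⟫_ℂ‖ ^ 2) e :=
      continuousAt_const.div (by fun_prop) (pow_ne_zero _ hez)
    have h2 : Continuous fun u : E ↦ ‖1 - ⟪u, f z⟫_ℂ‖ ^ 2 / (1 - ‖f z‖ ^ 2) := by fun_prop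
    exact (h1.tendsto.mono_left nhdsWithin_le_nhds).mul ((h2.tendsto e).comp hf)
  have hL := tendsto_nhds_unique (h.tendsto_one_sub_norm_sq_div hc hfe) <| hlim.congr' <| by
    filter_upwards [self_mem_nhdsWithin] with w hw
    exact (h.one_sub_norm_sq_div (mem_ball_zero_iff.1 hw) hz).symm
  rw [hL, horoFun, horoFun]
  field_simp

end IsBallAut

section Orbit

variable {g : E → E} {e : E} {c : ℝ}

lemma horoFun_iterate (hg : MapsTo g (ball 0 1) (ball 0 1))
    (hJ : ∀ z : E, ‖z‖ < 1 → horoFun e (g z) = c * horoFun e z) (n : ℕ) :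
    horoFun e (g^[n] 0) = c ^ n := by
  induction n with
  | zero => simp
  | succ n ih => rw [iterate_succ_apply', hJ _ (norm_iterate_lt_one hg n), ih, pow_succ']

lemma one_sub_norm_iterate_sq_le (hg : MapsTo g (ball 0 1) (ball 0 1)) (he : ‖e‖ ≤ 1)
    (hc : 0 < c) (hJ : ∀ z : E, ‖z‖ < 1 → horoFun e (g z) = c * horoFun e z) (n : ℕ) :
    1 - ‖g^[n] 0‖ ^ 2 ≤ 4 * c⁻¹ ^ n := by
  have hu := norm_iterate_lt_one hg n
  have h := horoFun_iterate hg hJ n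
  rw [horoFun, div_eq_iff (one_sub_norm_sq_pos hu).ne'] at h
  have h2 := norm_one_sub_inner_le_two he hu.le
  rw [inv_pow, ← div_eq_mul_inv, le_div_iff₀ (pow_pos hc n)]
  nlinarith [norm_nonneg (1 - ⟪e, g^[n] 0⟫_ℂ)]

lemma summable_one_sub_norm_iterate_sq (hg : MapsTo g (ball 0 1) (ball 0 1)) (he : ‖e‖ ≤ 1)
    (hc : 1 < c) (hJ : ∀ z : E, ‖z‖ < 1 → horoFun e (g z) = c * horoFun e z) :
    Summable fun n ↦ 1 - ‖g^[n] 0‖ ^ 2 :=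
  .of_nonneg_of_le (fun n ↦ (one_sub_norm_sq_pos (norm_iterate_lt_one hg n)).le)
    (one_sub_norm_iterate_sq_le hg he (by linarith) hJ)
    ((summable_geometric_of_lt_one (by positivity) (inv_lt_one_of_one_lt₀ hc)).mul_left 4)

lemma IsBallAut.oneSubPseudoDistSq_iterate {g' : E → E} (h : IsBallAut g g') (n : ℕ) :
    oneSubPseudoDistSq (g^[n] 0) (g^[n + 1] 0) = 1 - ‖g 0‖ ^ 2 := by
  induction n with
  | zero => simp
  | succ n ih =>
    have hu := norm_iterate_lt_one h.mapsTo (n + 1)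
    simp only [iterate_succ_apply'] at hu ih ⊢
    rw [h.oneSubPseudoDistSq_map (norm_iterate_lt_one h.mapsTo n) hu, ih]

lemma IsBallAut.cauchySeq_iterate {g' : E → E} (h : IsBallAut g g') (he : ‖e‖ ≤ 1) (hc : 1 < c)
    (hJ : ∀ z : E, ‖z‖ < 1 → horoFun e (g z) = c * horoFun e z) :
    CauchySeq fun n ↦ g^[n] 0 := by
  have hD : 0 < 1 - ‖g 0‖ ^ 2 := one_sub_norm_sq_pos (h.norm_lt_one (by simp))
  refine cauchySeq_of_dist_sq_le_geometric (K := 8 / √(1 - ‖g 0‖ ^ 2)) (by positivity)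
    (inv_lt_one_of_one_lt₀ hc) fun n ↦ ?_
  have hu := norm_iterate_lt_one h.mapsTo n
  have hu' := norm_iterate_lt_one h.mapsTo (n + 1)
  have hx := one_sub_norm_iterate_sq_le h.mapsTo he (by linarith) hJ n
  have hx' := (one_sub_norm_iterate_sq_le h.mapsTo he (by linarith) hJ (n + 1)).trans <|
    mul_le_mul_of_nonneg_left (pow_le_pow_of_le_one (by positivity)
      (inv_lt_one_of_one_lt₀ hc).le n.le_succ) (by norm_num)
  have hkey := h.oneSubPseudoDistSq_iterate n
  rw [oneSubPseudoDistSq, div_eq_iff (pow_ne_zero _ (norm_ne_zero_iff.2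
    (one_sub_inner_ne_zero hu.le hu')))] at hkey
  have hinner : ‖1 - ⟪g^[n] 0, g^[n + 1] 0⟫_ℂ‖ ≤ 4 * c⁻¹ ^ n / √(1 - ‖g 0‖ ^ 2) := by
    refine le_of_sq_le_sq ?_ (by positivity)
    rw [div_pow, Real.sq_sqrt hD.le, le_div_iff₀ hD, mul_comm, ← hkey]
    nlinarith [one_sub_norm_sq_pos hu, one_sub_norm_sq_pos hu']
  calc dist (g^[n] 0) (g^[n + 1] 0) ^ 2 ≤ 2 * ‖1 - ⟪g^[n] 0, g^[n + 1] 0⟫_ℂ‖ :=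
        dist_sq_le_two_mul_norm_one_sub_inner hu.le hu'.le
    _ ≤ 2 * (4 * c⁻¹ ^ n / √(1 - ‖g 0‖ ^ 2)) := by gcongr
    _ = 8 / √(1 - ‖g 0‖ ^ 2) * c⁻¹ ^ n := by ring

lemma IsBallAut.exists_tendsto_iterate [CompleteSpace E] {g' : E → E} (h : IsBallAut g g')
    (he : ‖e‖ ≤ 1) (hc : 1 < c) (hJ : ∀ z : E, ‖z‖ < 1 → horoFun e (g z) = c * horoFun e z) :
    ∃ ζ ∈ closedBall (0 : E) 1, Tendsto (fun n ↦ g^[n] 0) atTop (𝓝 ζ) := by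
  obtain ⟨ζ, hζ⟩ := cauchySeq_tendsto_of_complete (h.cauchySeq_iterate he hc hJ)
  refine ⟨ζ, isClosed_closedBall.mem_of_tendsto hζ (.of_forall fun n ↦ ?_), hζ⟩
  exact mem_closedBall_zero_iff.2 (norm_iterate_lt_one h.mapsTo n).le

end Orbit

section Parabolic

variable [CompleteSpace E] {φ φinv : E → E} {e : E}

lemma IsBallAut.horoFun_map_zero_le_one (h : IsBallAut φ φinv)
    (hc : ContinuousOn φ (closedBall 0 1)) (he : ‖e‖ ≤ 1) (hfix : φ e = e)
    (honly : ∀ z ∈ closedBall (0 : E) 1, φ z = z → z = e) : horoFun e (φ 0) ≤ 1 := by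
  by_contra! hL
  have hce := (hc e (mem_closedBall_zero_iff.2 he)).mono ball_subset_closedBall
  have hJ (z : E) (hz : ‖z‖ < 1) := h.horoFun_map hce hfix he hz
  have hu := fun n ↦ mem_ball_zero_iff.2 (norm_iterate_lt_one h.mapsTo n)
  obtain ⟨ζ, hζ, hlim⟩ := h.exists_tendsto_iterate he hL hJ
  have hfix' : IsFixedPt φ ζ := isFixedPt_of_tendsto (hc ζ hζ)
    (.of_forall fun n ↦ ball_subset_closedBall (hu n)) hlim <| by
      simpa only [comp_def, ← iterate_succ_apply' φ] using hlim.comp (tendsto_add_atTop_nat 1)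
  obtain rfl := honly ζ hζ hfix'
  have hue : Tendsto (fun n ↦ φ^[n] 0) atTop (𝓝[ball 0 1] ζ) :=
    tendsto_nhdsWithin_iff.2 ⟨hlim, .of_forall hu⟩
  refine not_summable_of_ratio_test_tendsto_gt_one hL ?_
    (summable_one_sub_norm_iterate_sq h.mapsTo he hL hJ)
  have hx (n : ℕ) : ‖1 - ‖φ^[n] 0‖ ^ 2‖ = 1 - ‖φ^[n] 0‖ ^ 2 :=
    Real.norm_of_nonneg (one_sub_norm_sq_pos (mem_ball_zero_iff.1 (hu n))).le
  refine ((h.tendsto_one_sub_norm_sq_div hce hfix).comp hue).congr fun n ↦ ?_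
  rw [hx, hx, comp_apply, iterate_succ_apply']

lemma IsBallAut.one_le_horoFun_map_zero (h : IsBallAut φ φinv)
    (hc : ContinuousOn φ (closedBall 0 1)) (he : ‖e‖ ≤ 1) (hfix : φ e = e)
    (honly : ∀ z ∈ closedBall (0 : E) 1, φ z = z → z = e) : 1 ≤ horoFun e (φ 0) := by
  by_contra! hL
  have hL0 : 0 < horoFun e (φ 0) := horoFun_pos he (h.norm_lt_one (by simp))
  have hce := (hc e (mem_closedBall_zero_iff.2 he)).mono ball_subset_closedBall
  have hJ (z : E) (hz : ‖z‖ < 1) : horoFun e (φinv z) = (horoFun e (φ 0))⁻¹ * horoFun e z := by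
    have := h.horoFun_map hce hfix he (h.symm.norm_lt_one hz)
    rw [h.invOn.2 (mem_ball_zero_iff.2 hz)] at this
    rw [this, inv_mul_cancel_left₀ hL0.ne']
  have hL' : 1 < (horoFun e (φ 0))⁻¹ := (one_lt_inv₀ hL0).2 hL
  have hu := fun n ↦ mem_ball_zero_iff.2 (norm_iterate_lt_one h.symm.mapsTo n)
  have hstep (n : ℕ) : φ (φinv^[n + 1] 0) = φinv^[n] 0 := by
    rw [iterate_succ_apply']
    exact h.invOn.2 (hu n)
  obtain ⟨ζ, hζ, hlim⟩ := h.symm.exists_tendsto_iterate he hL' hJ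
  have hlim' := hlim.comp (tendsto_add_atTop_nat 1)
  have hfix' : IsFixedPt φ ζ := isFixedPt_of_tendsto (hc ζ hζ)
    (.of_forall fun n ↦ ball_subset_closedBall (hu (n + 1))) hlim' <| by
      simpa only [comp_def, hstep] using hlim
  obtain rfl := honly ζ hζ hfix'
  have hue : Tendsto (fun n ↦ φinv^[n + 1] 0) atTop (𝓝[ball 0 1] ζ) :=
    tendsto_nhdsWithin_iff.2 ⟨hlim', .of_forall fun n ↦ hu (n + 1)⟩
  refine not_summable_of_ratio_test_tendsto_gt_one hL' ?_
    (summable_one_sub_norm_iterate_sq h.symm.mapsTo he hL' hJ)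
  have hx (n : ℕ) : ‖1 - ‖φinv^[n] 0‖ ^ 2‖ = 1 - ‖φinv^[n] 0‖ ^ 2 :=
    Real.norm_of_nonneg (one_sub_norm_sq_pos (mem_ball_zero_iff.1 (hu n))).le
  refine (((h.tendsto_one_sub_norm_sq_div hce hfix).comp hue).inv₀ hL0.ne').congr fun n ↦ ?_
  rw [hx, hx, comp_apply, hstep, inv_div]

end Parabolic

theorem IsBallAut.tendsto_one_sub_norm_sq_div_of_unique_fixedPoint [CompleteSpace E]
    {φ φinv : E → E} {e : E} (h : IsBallAut φ φinv) (hc : ContinuousOn φ (closedBall 0 1))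
    (he : ‖e‖ ≤ 1) (hfix : φ e = e) (honly : ∀ z ∈ closedBall (0 : E) 1, φ z = z → z = e) :
    Tendsto (fun z ↦ (1 - ‖φ z‖ ^ 2) / (1 - ‖z‖ ^ 2)) (𝓝[ball 0 1] e) (𝓝 1) := by
  have hL : horoFun e (φ 0) = 1 := le_antisymm (h.horoFun_map_zero_le_one hc he hfix honly)
    (h.one_le_horoFun_map_zero hc he hfix honly)
  simpa only [hL] using h.tendsto_one_sub_norm_sq_div
    ((hc e (mem_closedBall_zero_iff.2 he)).mono ball_subset_closedBall) hfix

end UnitBall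

/-- If `φ` is an automorphism of `𝔹_N` whose only fixed point in the closed ball is
`e₁ = (1,0,…,0)`, then `(1-‖φ(z)‖²)/(1-‖z‖²) → 1` as `z → e₁` within the ball. -/
theorem stmt12 {N : ℕ}
    (φ φinv : EuclideanSpace ℂ (Fin (N + 1)) → EuclideanSpace ℂ (Fin (N + 1)))
    (e₁ : EuclideanSpace ℂ (Fin (N + 1))) (he₁ : e₁ = EuclideanSpace.single 0 1)
    (hφc : ContinuousOn φ (closedBall 0 1))
    (hφ : DifferentiableOn ℂ φ (ball 0 1))
    (hφinv : DifferentiableOn ℂ φinv (ball 0 1))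
    (hφm : Set.MapsTo φ (ball 0 1) (ball 0 1))
    (hφinvm : Set.MapsTo φinv (ball 0 1) (ball 0 1))
    (hleft : ∀ z ∈ ball (0 : EuclideanSpace ℂ (Fin (N + 1))) 1, φinv (φ z) = z)
    (hright : ∀ z ∈ ball (0 : EuclideanSpace ℂ (Fin (N + 1))) 1, φ (φinv z) = z)
    (hfix : φ e₁ = e₁)
    (honly : ∀ z ∈ closedBall (0 : EuclideanSpace ℂ (Fin (N + 1))) 1, φ z = z → z = e₁) :
    Tendsto (fun z : EuclideanSpace ℂ (Fin (N + 1)) => (1 - ‖φ z‖ ^ 2) / (1 - ‖z‖ ^ 2))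
      (nhdsWithin e₁ (ball 0 1)) (nhds 1) :=
  UnitBall.IsBallAut.tendsto_one_sub_norm_sq_div_of_unique_fixedPoint
    ⟨hφ, hφinv, hφm, hφinvm, hleft, hright⟩ hφc (by simp [he₁]) hfix honly
end

section
/- Let $\varphi(z) = \frac{z+s}{1+sz}$ with $s \in (0,1)$ and let $\psi$ be holomorphic on $\mathbb{D}$, continuous on $\overline{\mathbb{D}}$, and bounded away from zero. If $\lambda$ belongs to the spectrum of the weighted composition operator $C_{\psi,\varphi}$ on $H^2(\mathbb{D})$, then $e^{i\theta}\lambda$ belongs to the spectrum for every $\theta \in \mathbb{R}$; that is, the spectrum of $C_{\psi,\varphi}$ is invariant under rotation. -/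
open Metric

/-- The Hardy space `H²(𝔻)`, modelled as the space of square-summable Taylor coefficient
sequences. -/
abbrev H2 : Type := lp (fun _ : ℕ => ℂ) 2

/-- The holomorphic function on the unit disc associated to an element of `H²(𝔻)`. -/
noncomputable def H2.toFun (f : H2) (z : ℂ) : ℂ := ∑' n : ℕ, f n * z ^ n

/-!
The Cayley transform `w(z) = (1 + z) / (1 - z)` maps the disc onto the right half-plane and
conjugates `φ` to the dilation `w ↦ k w` with `k = (1 + s) / (1 - s) > 1`. Hence for
`a = θ / log k` the function `F = w ^ (i a)` is holomorphic on the disc, bounded with bounded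
inverse `w ^ (-i a)` (its modulus is `exp (-a arg w)` and `|arg w| ≤ π / 2`), and satisfies
`F ∘ φ = e^{iθ} F`. Multiplication by `F` is therefore an invertible operator `M_F` on `H²` with
`C_{ψ,φ} M_F = e^{iθ} M_F C_{ψ,φ}`, so `C_{ψ,φ}` is similar to `e^{iθ} C_{ψ,φ}` and both have the
same spectrum.

That `M_G` is bounded by `sup |G|` for bounded holomorphic `G` follows from Parseval's identity on
the circles `|z| = r < 1`, letting `r → 1`.
-/

open MeasureTheory FormalMultilinearSeries

section PowerSeries

lemma eball_zero_one_eq_ball : eball (0 : ℂ) 1 = ball 0 1 := by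
  simpa using eball_coe (x := (0 : ℂ)) (ε := 1)

lemma hasFPowerSeriesOnBall_ofScalars_of_hasSum {c : ℕ → ℂ} {v : ℂ → ℂ}
    (hv : ∀ z ∈ ball (0 : ℂ) 1, HasSum (fun n => c n * z ^ n) (v z)) :
    HasFPowerSeriesOnBall v (ofScalars ℂ c) 0 1 := by
  have hradius : 1 ≤ (ofScalars ℂ c).radius := by
    refine ENNReal.le_of_forall_pos_nnreal_lt fun r _ hr => ?_
    have hr1 : (r : ℝ) < 1 := by exact_mod_cast hr
    refine (ofScalars ℂ c).le_radius_of_tendsto (l := 0) ?_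
    have := (hv r (by simpa using hr1)).summable.tendsto_atTop_zero.norm
    simpa [ofScalars_norm] using this
  refine ⟨hradius, one_pos, fun {y} hy => ?_⟩
  rw [eball_zero_one_eq_ball] at hy
  simpa [ofScalars_apply_eq, mul_comm] using hv y hy

namespace HasFPowerSeriesOnBall

variable {c : ℕ → ℂ} {v : ℂ → ℂ} (hv : HasFPowerSeriesOnBall v (ofScalars ℂ c) 0 1)
include hv

lemma hasSum_ofScalars {z : ℂ} (hz : z ∈ ball (0 : ℂ) 1) :
    HasSum (fun n => c n * z ^ n) (v z) := by
  rw [← eball_zero_one_eq_ball] at hz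
  simpa [ofScalars_apply_eq, mul_comm] using hv.hasSum hz

lemma summable_norm_ofScalars_mul_pow {r : ℝ} (hr0 : 0 ≤ r) (hr1 : r < 1) :
    Summable fun n => ‖c n‖ * r ^ n := by
  lift r to NNReal using hr0
  have hr : (r : ENNReal) < (ofScalars ℂ c).radius :=
    lt_of_lt_of_le (by exact_mod_cast hr1) hv.r_le
  simpa [ofScalars_norm] using (ofScalars ℂ c).summable_norm_mul_pow hr

end HasFPowerSeriesOnBall

end PowerSeries

section Parseval

open Real

noncomputable def fourierExp (j : ℤ) (t : ℝ) : ℂ := Complex.exp (↑(2 * π * j * t) * Complex.I)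

lemma norm_fourierExp (j : ℤ) (t : ℝ) : ‖fourierExp j t‖ = 1 :=
  Complex.norm_exp_ofReal_mul_I _

lemma fourierExp_add (j k : ℤ) (t : ℝ) :
    fourierExp (j + k) t = fourierExp j t * fourierExp k t := by
  simp only [fourierExp, ← Complex.exp_add]
  push_cast
  ring_nf

lemma conj_fourierExp (j : ℤ) (t : ℝ) :
    starRingEnd ℂ (fourierExp j t) = fourierExp (-j) t := by
  simp only [fourierExp, ← Complex.exp_conj, map_mul, Complex.conj_ofReal, Complex.conj_I]
  push_cast
  ring_nf

lemma fourierExp_one_pow (n : ℕ) (t : ℝ) : fourierExp 1 t ^ n = fourierExp n t := by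
  simp only [fourierExp, ← Complex.exp_nat_mul]
  push_cast
  ring_nf

@[fun_prop]
lemma continuous_fourierExp (j : ℤ) : Continuous (fourierExp j) := by
  unfold fourierExp
  fun_prop

lemma integral_fourierExp (j : ℤ) :
    ∫ t in Set.Ioc (0 : ℝ) 1, fourierExp j t = if j = 0 then 1 else 0 := by
  rw [← intervalIntegral.integral_of_le zero_le_one]
  split_ifs with hj
  · simp [hj, fourierExp]
  have hc : (2 * π * j * Complex.I : ℂ) ≠ 0 := by
    simp [hj, Real.pi_ne_zero, Complex.I_ne_zero]
  have h : fourierExp j = fun t : ℝ => Complex.exp (2 * π * j * Complex.I * t) := by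
    ext t
    simp only [fourierExp]
    push_cast
    ring_nf
  rw [h, integral_exp_mul_complex hc]
  have : Complex.exp (2 * π * j * Complex.I) = 1 := by
    simpa [mul_comm, mul_left_comm, mul_assoc] using Complex.exp_int_mul_two_pi_mul_I j
  simp [this]

variable {b : ℕ → ℂ} (hb : Summable fun n => ‖b n‖) {V : ℝ → ℂ}
  (hV : ∀ t, HasSum (fun n => b n * fourierExp n t) (V t))
include hb hV

lemma hasSum_integral_mul_of_hasSum_fourierExp {g : ℝ → ℂ} (hg : Continuous g) :
    HasSum (fun n => b n * ∫ t in Set.Ioc (0 : ℝ) 1, fourierExp n t * g t)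
      (∫ t in Set.Ioc (0 : ℝ) 1, V t * g t) := by
  have hint : ∀ n : ℕ, Integrable (fun t => b n * fourierExp n t * g t)
      (volume.restrict (Set.Ioc (0 : ℝ) 1)) := fun n =>
    (by fun_prop : Continuous fun t => b n * fourierExp n t * g t).integrableOn_Ioc
  have hnorm : Summable fun n : ℕ =>
      ∫ t in Set.Ioc (0 : ℝ) 1, ‖b n * fourierExp n t * g t‖ := by
    simpa [norm_fourierExp, integral_const_mul] using hb.mul_right (∫ t in Set.Ioc (0 : ℝ) 1, ‖g t‖)
  have hsum := hasSum_integral_of_summable_integral_norm hint hnorm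
  simp only [mul_assoc, integral_const_mul] at hsum
  have hVg : ∀ t, ∑' n, b n * (fourierExp n t * g t) = V t * g t := fun t => by
    simpa only [mul_assoc] using ((hV t).mul_right (g t)).tsum_eq
  simpa only [hVg] using hsum

lemma integral_fourierExp_neg_mul_of_hasSum_fourierExp (m : ℕ) :
    ∫ t in Set.Ioc (0 : ℝ) 1, fourierExp (-m) t * V t = b m := by
  have h := hasSum_integral_mul_of_hasSum_fourierExp hb hV (continuous_fourierExp (-m))
  simp only [← fourierExp_add, integral_fourierExp, add_neg_eq_zero, Nat.cast_inj, mul_ite,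
    mul_one, mul_zero] at h
  have hδ : HasSum (fun n => if n = m then b n else 0) (b m) := by
    convert hasSum_ite_eq m (b m) using 2 with n
    split_ifs with hn <;> simp [hn]
  simpa only [mul_comm] using h.unique hδ

theorem hasSum_sq_norm_of_hasSum_fourierExp (hVc : Continuous V) :
    HasSum (fun n => ‖b n‖ ^ 2) (∫ t in Set.Ioc (0 : ℝ) 1, ‖V t‖ ^ 2) := by
  have h := hasSum_integral_mul_of_hasSum_fourierExp hb hV (Complex.continuous_conj.comp hVc)
  have hcoeff : ∀ n : ℕ, ∫ t in Set.Ioc (0 : ℝ) 1, fourierExp n t * starRingEnd ℂ (V t) =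
      starRingEnd ℂ (b n) := fun n => by
    rw [← integral_fourierExp_neg_mul_of_hasSum_fourierExp hb hV n, ← integral_conj]
    simp only [map_mul, conj_fourierExp, neg_neg]
  simp only [Function.comp_apply, hcoeff, Complex.mul_conj'] at h
  have hint : ∫ t in Set.Ioc (0 : ℝ) 1, (‖V t‖ : ℂ) ^ 2 =
      ((∫ t in Set.Ioc (0 : ℝ) 1, ‖V t‖ ^ 2 : ℝ) : ℂ) := by
    rw [← integral_complex_ofReal]
    push_cast
    rfl
  rw [hint] at h
  exact_mod_cast h

end Parseval

lemma ofReal_mul_fourierExp_mem_ball {r : ℝ} (hr0 : 0 ≤ r) (hr1 : r < 1) (t : ℝ) :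
    (r : ℂ) * fourierExp 1 t ∈ ball (0 : ℂ) 1 := by
  simpa [norm_fourierExp, abs_of_nonneg hr0] using hr1

theorem HasFPowerSeriesOnBall.hasSum_sq_norm_mul_pow {c : ℕ → ℂ} {v : ℂ → ℂ}
    (hv : HasFPowerSeriesOnBall v (ofScalars ℂ c) 0 1) {r : ℝ} (hr0 : 0 ≤ r) (hr1 : r < 1) :
    HasSum (fun n => ‖c n‖ ^ 2 * r ^ (2 * n))
      (∫ t in Set.Ioc (0 : ℝ) 1, ‖v (r * fourierExp 1 t)‖ ^ 2) := by
  have hmem := ofReal_mul_fourierExp_mem_ball hr0 hr1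
  have hV : ∀ t, HasSum (fun n => c n * r ^ n * fourierExp n t) (v (r * fourierExp 1 t)) :=
    fun t => by simpa [mul_pow, fourierExp_one_pow, mul_assoc] using hv.hasSum_ofScalars (hmem t)
  have hVc : Continuous fun t => v (r * fourierExp 1 t) :=
    (eball_zero_one_eq_ball ▸ hv.continuousOn).comp_continuous (by fun_prop) hmem
  have hb : Summable fun n => ‖c n * r ^ n‖ := by
    simpa [abs_of_nonneg hr0] using hv.summable_norm_ofScalars_mul_pow hr0 hr1
  simpa [mul_pow, ← pow_mul', abs_of_nonneg hr0] using hasSum_sq_norm_of_hasSum_fourierExp hb hV hVc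

lemma sum_range_sq_norm_le_of_integral_le {c : ℕ → ℂ} {v : ℂ → ℂ}
    (hv : HasFPowerSeriesOnBall v (ofScalars ℂ c) 0 1) {K : ℝ}
    (hK : ∀ r : ℝ, 0 ≤ r → r < 1 → ∫ t in Set.Ioc (0 : ℝ) 1, ‖v (r * fourierExp 1 t)‖ ^ 2 ≤ K)
    (N : ℕ) : ∑ n ∈ Finset.range N, ‖c n‖ ^ 2 ≤ K := by
  have hlim : Filter.Tendsto (fun r : ℝ => ∑ n ∈ Finset.range N, ‖c n‖ ^ 2 * r ^ (2 * n))
      (nhdsWithin 1 (Set.Iio 1)) (nhds (∑ n ∈ Finset.range N, ‖c n‖ ^ 2)) := by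
    have hcont : Continuous fun r : ℝ => ∑ n ∈ Finset.range N, ‖c n‖ ^ 2 * r ^ (2 * n) := by
      fun_prop
    simpa using (hcont.tendsto 1).mono_left nhdsWithin_le_nhds
  refine le_of_tendsto hlim ?_
  filter_upwards [Ioo_mem_nhdsLT zero_lt_one] with r hr
  have hterm_nonneg : ∀ n, 0 ≤ ‖c n‖ ^ 2 * r ^ (2 * n) := fun n =>
    mul_nonneg (sq_nonneg _) (pow_nonneg hr.1.le _)
  exact (sum_le_hasSum _ (fun n _ => hterm_nonneg n)
    (hv.hasSum_sq_norm_mul_pow hr.1.le hr.2)).trans (hK r hr.1.le hr.2)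

noncomputable def taylorCoeff (g : ℂ → ℂ) (n : ℕ) : ℂ := (n.factorial : ℂ)⁻¹ * iteratedDeriv n g 0

lemma hasFPowerSeriesOnBall_taylorCoeff {g : ℂ → ℂ} (hg : DifferentiableOn ℂ g (ball 0 1)) :
    HasFPowerSeriesOnBall g (ofScalars ℂ (taylorCoeff g)) 0 1 :=
  hasFPowerSeriesOnBall_ofScalars_of_hasSum fun z hz => by
    simpa [taylorCoeff, smul_eq_mul, mul_comm, mul_left_comm] using
      Complex.hasSum_taylorSeries_on_ball hg hz

namespace H2

lemma norm_apply_le (f : H2) (n : ℕ) : ‖f n‖ ≤ ‖f‖ :=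
  lp.norm_apply_le_norm two_ne_zero f n

lemma hasSum_toFun (f : H2) {z : ℂ} (hz : z ∈ ball (0 : ℂ) 1) :
    HasSum (fun n => f n * z ^ n) (f.toFun z) := by
  have hz' : ‖z‖ < 1 := by simpa using hz
  refine (Summable.of_norm_bounded ((summable_geometric_of_lt_one (norm_nonneg z) hz').mul_left ‖f‖)
    fun n => ?_).hasSum
  rw [norm_mul, norm_pow]
  exact mul_le_mul_of_nonneg_right (f.norm_apply_le n) (by positivity)

lemma hasFPowerSeriesOnBall_toFun (f : H2) :
    HasFPowerSeriesOnBall f.toFun (ofScalars ℂ f) 0 1 :=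
  hasFPowerSeriesOnBall_ofScalars_of_hasSum fun _ => f.hasSum_toFun

lemma differentiableOn_toFun (f : H2) : DifferentiableOn ℂ f.toFun (ball 0 1) :=
  eball_zero_one_eq_ball ▸ f.hasFPowerSeriesOnBall_toFun.differentiableOn

lemma ext_toFun {f g : H2} (h : ∀ z ∈ ball (0 : ℂ) 1, f.toFun z = g.toFun z) : f = g := by
  have hg : HasFPowerSeriesOnBall f.toFun (ofScalars ℂ g) 0 1 :=
    hasFPowerSeriesOnBall_ofScalars_of_hasSum fun z hz => h z hz ▸ g.hasSum_toFun hz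
  exact lp.ext (ofScalars_series_injective ℂ ℂ
    (f.hasFPowerSeriesOnBall_toFun.hasFPowerSeriesAt.eq_formalMultilinearSeries
      hg.hasFPowerSeriesAt))

lemma toFun_add (f g : H2) {z : ℂ} (hz : z ∈ ball (0 : ℂ) 1) :
    (f + g).toFun z = f.toFun z + g.toFun z := by
  refine ((f + g).hasSum_toFun hz).unique ?_
  simpa [add_mul] using (f.hasSum_toFun hz).add (g.hasSum_toFun hz)

lemma toFun_smul (a : ℂ) (f : H2) {z : ℂ} (hz : z ∈ ball (0 : ℂ) 1) :
    (a • f).toFun z = a * f.toFun z := by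
  refine ((a • f).hasSum_toFun hz).unique ?_
  simpa [mul_assoc] using (f.hasSum_toFun hz).mul_left a

lemma hasSum_sq_norm (f : H2) : HasSum (fun n => ‖f n‖ ^ 2) (‖f‖ ^ 2) := by
  simpa using lp.hasSum_norm (p := 2) (by norm_num) f

lemma integral_sq_norm_toFun_le (f : H2) {r : ℝ} (hr0 : 0 ≤ r) (hr1 : r < 1) :
    ∫ t in Set.Ioc (0 : ℝ) 1, ‖f.toFun (r * fourierExp 1 t)‖ ^ 2 ≤ ‖f‖ ^ 2 :=
  hasSum_le (fun n => mul_le_of_le_one_right (by positivity) (pow_le_one₀ hr0 hr1.le))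
    (f.hasFPowerSeriesOnBall_toFun.hasSum_sq_norm_mul_pow hr0 hr1) f.hasSum_sq_norm

lemma toFun_mk_taylorCoeff {g : ℂ → ℂ} (hg : DifferentiableOn ℂ g (ball 0 1))
    (hmem : Memℓp (taylorCoeff g) 2) {z : ℂ} (hz : z ∈ ball (0 : ℂ) 1) :
    H2.toFun ⟨taylorCoeff g, hmem⟩ z = g z :=
  (hasSum_toFun _ hz).unique ((hasFPowerSeriesOnBall_taylorCoeff hg).hasSum_ofScalars hz)

section MulOperator

variable {G : ℂ → ℂ} (hG : DifferentiableOn ℂ G (ball 0 1)) {C : ℝ}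
  (hGC : ∀ z ∈ ball (0 : ℂ) 1, ‖G z‖ ≤ C)

include hG hGC in
lemma sum_range_sq_norm_taylorCoeff_mul_le (f : H2) (N : ℕ) :
    ∑ n ∈ Finset.range N, ‖taylorCoeff (fun z => G z * f.toFun z) n‖ ^ 2 ≤ (C * ‖f‖) ^ 2 := by
  refine sum_range_sq_norm_le_of_integral_le
    (hasFPowerSeriesOnBall_taylorCoeff (hG.mul f.differentiableOn_toFun)) (fun r hr0 hr1 => ?_) N
  have hmem := ofReal_mul_fourierExp_mem_ball hr0 hr1
  have hfc : Continuous fun t => f.toFun (r * fourierExp 1 t) :=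
    f.differentiableOn_toFun.continuousOn.comp_continuous (by fun_prop) hmem
  calc ∫ t in Set.Ioc (0 : ℝ) 1, ‖G (r * fourierExp 1 t) * f.toFun (r * fourierExp 1 t)‖ ^ 2
      ≤ ∫ t in Set.Ioc (0 : ℝ) 1, C ^ 2 * ‖f.toFun (r * fourierExp 1 t)‖ ^ 2 := by
        refine integral_mono_of_nonneg (.of_forall fun t => by positivity)
          (by fun_prop : Continuous _).integrableOn_Ioc (.of_forall fun t => ?_)
        simp only [norm_mul, mul_pow]
        gcongr
        exact hGC _ (hmem t)
    _ = C ^ 2 * ∫ t in Set.Ioc (0 : ℝ) 1, ‖f.toFun (r * fourierExp 1 t)‖ ^ 2 :=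
        integral_const_mul _ _
    _ ≤ (C * ‖f‖) ^ 2 := by
        rw [mul_pow]
        gcongr
        exact f.integral_sq_norm_toFun_le hr0 hr1

include hG hGC in
lemma memℓp_taylorCoeff_mul (f : H2) : Memℓp (taylorCoeff fun z => G z * f.toFun z) 2 := by
  have h := summable_of_sum_range_le (fun n => sq_nonneg _)
    (sum_range_sq_norm_taylorCoeff_mul_le hG hGC f)
  exact memℓp_gen (by simpa using h)

include hG hGC in
lemma norm_mk_taylorCoeff_mul_le (f : H2) :
    ‖(⟨_, memℓp_taylorCoeff_mul hG hGC f⟩ : H2)‖ ≤ C * ‖f‖ := by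
  have hC : 0 ≤ C := (norm_nonneg _).trans (hGC 0 (mem_ball_self one_pos))
  refine (pow_le_pow_iff_left₀ (norm_nonneg _) (by positivity) two_ne_zero).mp ?_
  rw [← (hasSum_sq_norm _).tsum_eq]
  exact Real.tsum_le_of_sum_range_le (fun n => sq_nonneg _)
    (sum_range_sq_norm_taylorCoeff_mul_le hG hGC f)

lemma toFun_mk_taylorCoeff_mul (f : H2) {z : ℂ} (hz : z ∈ ball (0 : ℂ) 1) :
    H2.toFun ⟨_, memℓp_taylorCoeff_mul hG hGC f⟩ z = G z * f.toFun z :=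
  toFun_mk_taylorCoeff (hG.mul f.differentiableOn_toFun) _ hz

noncomputable def mulOperator : H2 →L[ℂ] H2 :=
  LinearMap.mkContinuous
    { toFun := fun f => ⟨_, memℓp_taylorCoeff_mul hG hGC f⟩
      map_add' := fun f g => ext_toFun fun z hz => by
        simp only [toFun_add _ _ hz, toFun_mk_taylorCoeff_mul hG hGC _ hz, mul_add]
      map_smul' := fun a f => ext_toFun fun z hz => by
        simp only [RingHom.id_apply, toFun_smul _ _ hz, toFun_mk_taylorCoeff_mul hG hGC _ hz]
        ring }
    C (norm_mk_taylorCoeff_mul_le hG hGC)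

lemma toFun_mulOperator (f : H2) {z : ℂ} (hz : z ∈ ball (0 : ℂ) 1) :
    (mulOperator hG hGC f).toFun z = G z * f.toFun z :=
  toFun_mk_taylorCoeff_mul hG hGC f hz

lemma mulOperator_mul_eq_one {H : ℂ → ℂ} (hH : DifferentiableOn ℂ H (ball 0 1)) {C' : ℝ}
    (hHC : ∀ z ∈ ball (0 : ℂ) 1, ‖H z‖ ≤ C') (hGH : ∀ z ∈ ball (0 : ℂ) 1, G z * H z = 1) :
    mulOperator hG hGC * mulOperator hH hHC = 1 :=
  ContinuousLinearMap.ext fun f => ext_toFun fun z hz => by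
    rw [mul_apply_eq_comp, one_apply_eq_self, toFun_mulOperator _ _ _ hz,
      toFun_mulOperator _ _ _ hz, ← mul_assoc, hGH z hz, one_mul]

lemma mul_mulOperator_eq_smul {ψ φ : ℂ → ℂ} {T : H2 →L[ℂ] H2}
    (hT : ∀ f : H2, ∀ z ∈ ball (0 : ℂ) 1, (T f).toFun z = ψ z * f.toFun (φ z))
    (hφ : ∀ z ∈ ball (0 : ℂ) 1, φ z ∈ ball (0 : ℂ) 1) {μ : ℂ}
    (hGφ : ∀ z ∈ ball (0 : ℂ) 1, G (φ z) = μ * G z) :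
    T * mulOperator hG hGC = μ • (mulOperator hG hGC * T) :=
  ContinuousLinearMap.ext fun f => ext_toFun fun z hz => by
    rw [mul_apply_eq_comp, _root_.smul_apply, mul_apply_eq_comp, toFun_smul _ _ hz, hT _ _ hz,
      toFun_mulOperator _ _ _ (hφ z hz), toFun_mulOperator _ _ _ hz, hT _ _ hz, hGφ z hz]
    ring

end MulOperator

end H2

section CayleyImagPow

open Complex

lemma one_sub_ne_zero_of_mem_ball {z : ℂ} (hz : z ∈ ball (0 : ℂ) 1) : (1 : ℂ) - z ≠ 0 := by
  rw [sub_ne_zero]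
  rintro rfl
  simp at hz

lemma re_cayley_pos {z : ℂ} (hz : z ∈ ball (0 : ℂ) 1) : 0 < ((1 + z) / (1 - z)).re := by
  have hz1 : normSq z < 1 := by
    rw [normSq_eq_norm_sq]
    have : ‖z‖ < 1 := by simpa using hz
    nlinarith [norm_nonneg z]
  have hre : ((1 + z) / (1 - z)).re = (1 - normSq z) / normSq (1 - z) := by
    rw [div_re, ← add_div]
    simp only [normSq_apply, add_re, sub_re, add_im, sub_im, one_re, one_im]
    ring
  rw [hre]
  exact div_pos (by linarith) (normSq_pos.mpr (one_sub_ne_zero_of_mem_ball hz))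

lemma cayley_ne_zero {z : ℂ} (hz : z ∈ ball (0 : ℂ) 1) : (1 + z) / (1 - z) ≠ 0 := fun h => by
  simpa [h] using re_cayley_pos hz

noncomputable def cayleyImagPow (a : ℝ) (z : ℂ) : ℂ :=
  exp (a * I * log ((1 + z) / (1 - z)))

lemma cayleyImagPow_mul_neg (a : ℝ) (z : ℂ) : cayleyImagPow a z * cayleyImagPow (-a) z = 1 := by
  rw [cayleyImagPow, cayleyImagPow, ← exp_add]
  push_cast
  ring_nf
  exact exp_zero

lemma norm_cayleyImagPow_le (a : ℝ) {z : ℂ} (hz : z ∈ ball (0 : ℂ) 1) :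
    ‖cayleyImagPow a z‖ ≤ Real.exp (|a| * (Real.pi / 2)) := by
  have harg : |arg ((1 + z) / (1 - z))| ≤ Real.pi / 2 :=
    abs_arg_le_pi_div_two_iff.mpr (re_cayley_pos hz).le
  rw [cayleyImagPow, norm_exp, Real.exp_le_exp]
  simp only [mul_re, mul_im, ofReal_re, ofReal_im, I_re, I_im, log_re, log_im]
  calc _ = -(a * arg ((1 + z) / (1 - z))) := by ring
    _ ≤ |a| * |arg ((1 + z) / (1 - z))| := by rw [← abs_mul]; exact neg_le_abs _
    _ ≤ |a| * (Real.pi / 2) := by gcongr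

lemma differentiableOn_cayleyImagPow (a : ℝ) :
    DifferentiableOn ℂ (cayleyImagPow a) (ball 0 1) := fun z hz => by
  have hne := one_sub_ne_zero_of_mem_ball hz
  have hslit : (1 + z) / (1 - z) ∈ slitPlane := Or.inl (re_cayley_pos hz)
  exact (((differentiableAt_id.const_add 1).div (differentiableAt_id.const_sub 1) hne).clog
    hslit |>.const_mul _ |>.cexp).differentiableWithinAt

lemma one_add_mul_ne_zero_of_mem_ball {s : ℝ} (hs : |s| < 1) {z : ℂ} (hz : z ∈ ball (0 : ℂ) 1) :
    (1 : ℂ) + s * z ≠ 0 := by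
  have hsz : ‖(s : ℂ) * z‖ < 1 := by
    rw [norm_mul, norm_real, Real.norm_eq_abs]
    exact mul_lt_one_of_nonneg_of_lt_one_left (abs_nonneg s) hs (mem_ball_zero_iff.mp hz).le
  intro h
  rw [show (s : ℂ) * z = -1 by linear_combination h] at hsz
  simp at hsz

lemma moebius_mem_ball {s : ℝ} (hs : |s| < 1) {z : ℂ} (hz : z ∈ ball (0 : ℂ) 1) :
    (z + s) / (1 + s * z) ∈ ball (0 : ℂ) 1 := by
  have hz1 : normSq z < 1 := by
    rw [normSq_eq_norm_sq]
    exact pow_lt_one₀ (norm_nonneg z) (by simpa using hz) two_ne_zero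
  have hs1 : s ^ 2 < 1 := by nlinarith [abs_nonneg s, sq_abs s]
  have hgap : normSq (1 + s * z) - normSq (z + s) = (1 - s ^ 2) * (1 - normSq z) := by
    simp only [normSq_apply, add_re, add_im, mul_re, mul_im, ofReal_re, ofReal_im, one_re, one_im]
    ring
  have hlt : normSq (z + s) < normSq (1 + s * z) := by
    nlinarith [mul_pos (sub_pos.mpr hs1) (sub_pos.mpr hz1)]
  rw [mem_ball_zero_iff, norm_div,
    div_lt_one (norm_pos_iff.mpr (one_add_mul_ne_zero_of_mem_ball hs hz))]
  rw [normSq_eq_norm_sq, normSq_eq_norm_sq] at hlt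
  exact lt_of_pow_lt_pow_left₀ 2 (norm_nonneg _) hlt

lemma cayleyImagPow_moebius (a : ℝ) {s : ℝ} (hs : |s| < 1) {z : ℂ} (hz : z ∈ ball (0 : ℂ) 1) :
    cayleyImagPow a ((z + s) / (1 + s * z)) =
      exp (↑(a * Real.log ((1 + s) / (1 - s))) * I) * cayleyImagPow a z := by
  obtain ⟨hs0, hs1⟩ := abs_lt.mp hs
  have hk : 0 < (1 + s) / (1 - s) := div_pos (by linarith) (by linarith)
  have hz1 : (1 : ℂ) - z ≠ 0 := one_sub_ne_zero_of_mem_ball hz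
  have hs1' : (1 : ℂ) - s ≠ 0 := by exact_mod_cast (by linarith : (1 : ℝ) - s ≠ 0)
  have hden := one_add_mul_ne_zero_of_mem_ball hs hz
  have hnum : 1 + (z + s) / (1 + s * z) = (1 + s) * (1 + z) / (1 + s * z) := by
    rw [eq_div_iff hden, add_mul, div_mul_cancel₀ _ hden]
    ring
  have hdenom : 1 - (z + s) / (1 + s * z) = (1 - s) * (1 - z) / (1 + s * z) := by
    rw [eq_div_iff hden, sub_mul, div_mul_cancel₀ _ hden]
    ring
  have hcayley : (1 + (z + s) / (1 + s * z)) / (1 - (z + s) / (1 + s * z)) =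
      ((1 + s) / (1 - s) : ℝ) * ((1 + z) / (1 - z)) := by
    rw [hnum, hdenom, div_div_div_cancel_right₀ hden, mul_div_mul_comm]
    push_cast
    rfl
  rw [cayleyImagPow, cayleyImagPow, hcayley, log_ofReal_mul hk (cayley_ne_zero hz), ← exp_add]
  congr 1
  push_cast
  ring

end CayleyImagPow

theorem spectrum.smul_mem_of_mul_units_eq_smul {R A : Type*} [CommSemiring R] [Ring A]
    [Algebra R A] {a : A} (u : Aˣ) (μ : Rˣ) (h : a * u = μ • (u * a)) {x : R}
    (hx : x ∈ spectrum R a) : μ • x ∈ spectrum R a := by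
  have hconj : ↑u⁻¹ * a * u = μ • a := by
    rw [mul_assoc, h, mul_smul_comm, ← mul_assoc, u.inv_mul, one_mul]
  rwa [← spectrum.units_conjugate' (u := u), hconj, spectrum.smul_mem_smul_iff]

noncomputable def H2.cayleyImagPowUnit (a : ℝ) : (H2 →L[ℂ] H2)ˣ where
  val := mulOperator (differentiableOn_cayleyImagPow a) fun _ => norm_cayleyImagPow_le a
  inv := mulOperator (differentiableOn_cayleyImagPow (-a)) fun _ => norm_cayleyImagPow_le (-a)
  val_inv := mulOperator_mul_eq_one _ _ _ _ fun z _ => cayleyImagPow_mul_neg a z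
  inv_val := mulOperator_mul_eq_one _ _ _ _ fun z _ => by
    simpa using cayleyImagPow_mul_neg (-a) z

theorem stmt16_general (s : ℝ) (hs : s ∈ Set.Ioo (0 : ℝ) 1)
    (φ : ℂ → ℂ) (hφ : ∀ z : ℂ, φ z = (z + s) / (1 + s * z))
    (ψ : ℂ → ℂ)
    (T : H2 →L[ℂ] H2)
    (hT : ∀ f : H2, ∀ z ∈ ball (0 : ℂ) 1, (T f).toFun z = ψ z * f.toFun (φ z)) :
    ∀ θ : ℝ, ∀ lam ∈ spectrum ℂ T, Complex.exp (θ * Complex.I) * lam ∈ spectrum ℂ T := by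
  intro θ lam hlam
  obtain ⟨hs0, hs1⟩ := hs
  have hs' : |s| < 1 := abs_lt.mpr ⟨by linarith, hs1⟩
  have hlog : Real.log ((1 + s) / (1 - s)) ≠ 0 :=
    (Real.log_pos ((one_lt_div (by linarith)).mpr (by linarith))).ne'
  set a := θ / Real.log ((1 + s) / (1 - s))
  have hsymbol : ∀ z ∈ ball (0 : ℂ) 1,
      cayleyImagPow a (φ z) = Complex.exp (θ * Complex.I) * cayleyImagPow a z := fun z hz => by
    rw [hφ, cayleyImagPow_moebius a hs' hz, div_mul_cancel₀ θ hlog]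
  have hTu : T * H2.cayleyImagPowUnit a = (Units.mk0 _ (Complex.exp_ne_zero _)) •
      (H2.cayleyImagPowUnit a * T) :=
    H2.mul_mulOperator_eq_smul (differentiableOn_cayleyImagPow a)
      (fun _ => norm_cayleyImagPow_le a) hT (fun z hz => hφ z ▸ moebius_mem_ball hs' hz) hsymbol
  exact spectrum.smul_mem_of_mul_units_eq_smul _ _ hTu hlam

/-- Let `φ(z) = (z+s)/(1+sz)` with `s ∈ (0,1)` and let `ψ` be holomorphic on `𝔻`, continuous
on the closed disc and bounded away from zero. Then the spectrum of the weighted composition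
operator `C_{ψ,φ}` on `H²(𝔻)` is invariant under rotations: if `λ` is in the spectrum then so
is `e^{iθ}λ` for every `θ ∈ ℝ`. -/
theorem stmt16 (s : ℝ) (hs : s ∈ Set.Ioo (0 : ℝ) 1)
    (φ : ℂ → ℂ) (hφ : ∀ z : ℂ, φ z = (z + s) / (1 + s * z))
    (ψ : ℂ → ℂ)
    (hψc : ContinuousOn ψ (closedBall 0 1))
    (hψ : DifferentiableOn ℂ ψ (ball 0 1))
    (hψ0 : ∃ ε > (0 : ℝ), ∀ z ∈ ball (0 : ℂ) 1, ε ≤ ‖ψ z‖)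
    (T : H2 →L[ℂ] H2)
    (hT : ∀ f : H2, ∀ z ∈ ball (0 : ℂ) 1, (T f).toFun z = ψ z * f.toFun (φ z)) :
    ∀ θ : ℝ, ∀ lam ∈ spectrum ℂ T, Complex.exp (θ * Complex.I) * lam ∈ spectrum ℂ T :=
  stmt16_general s hs φ hφ ψ T hT
end
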